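/- Let A ∈ ℝ^{m×m} and C ∈ ℝ^{n×n} be symmetric real matrices, B ∈ ℝ^{m×n}, and η ∈ ℝ. If θ, φ, θ', φ' satisfy the implicit linearized SPPM equations θ' = θ − ηAθ − ηBφ' and φ' = φ + ηBᵀθ' + ηCφ, then ‖θ'‖² + ‖φ'‖² ≤ ‖I_m − ηA‖_op² ‖θ‖² / (1 + η² λ_min(BBᵀ)) + ‖I_n + ηC‖_op² ‖φ‖² / (1 + η² λ_min(BᵀB)), where λ_min denotes the smallest eigenvalue of a symmetric positive semidefinite matrix and ‖·‖_op the operator norm (which equals the spectral radius for symmetric matrices). -/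

import Mathlib

/-!
With `u = (1 - ηA)θ` and `v = (1 + ηC)φ`, the step says `(1 + ηS)(θ', φ') = (u, v)` where
`S = [[0, B], [-Bᵀ, 0]]` is skew-symmetric, so the step has at most one solution. Writing
`(1 + η²BBᵀ)p = u` and `(1 + η²BᵀB)q = v` (both matrices are positive definite), the pair
`(p - ηBq, q + ηBᵀp)` is that solution, and skewness makes the cross terms cancel:
`‖θ'‖² + ‖φ'‖² = ⟪p, u⟫ + ⟪q, v⟫`. Since `⟪p, u⟫ ≥ (1 + η²λ_min(BBᵀ))‖p‖²`, Cauchy–Schwarz gives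
`⟪p, u⟫ ≤ ‖u‖² / (1 + η²λ_min(BBᵀ))`, and likewise for `q`; finally `‖u‖ ≤ ‖1 - ηA‖ ‖θ‖` and
`‖v‖ ≤ ‖1 + ηC‖ ‖φ‖`.
-/

open Matrix Filter Topology

/-- The squared Euclidean norm of a vector `v : ι → ℝ`. -/
noncomputable def eNormSq {ι : Type*} [Fintype ι] (v : ι → ℝ) : ℝ :=
  ‖(EuclideanSpace.equiv ι ℝ).symm v‖ ^ 2

lemma eNormSq_eq_dotProduct {ι : Type*} [Fintype ι] (v : ι → ℝ) : eNormSq v = v ⬝ᵥ v := by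
  rw [eNormSq, EuclideanSpace.norm_eq, Real.sq_sqrt (by positivity)]
  simp [dotProduct, sq]

lemma eNormSq_mulVec_le {ι : Type*} [Fintype ι] [DecidableEq ι] (M : Matrix ι ι ℝ) (x : ι → ℝ) :
    eNormSq (M *ᵥ x) ≤ ‖Matrix.toEuclideanCLM (𝕜 := ℝ) M‖ ^ 2 * eNormSq x := by
  rw [eNormSq, eNormSq, ← mul_pow]
  gcongr
  exact (toEuclideanCLM_toLp M x).symm ▸ (toEuclideanCLM (𝕜 := ℝ) M).le_opNorm _

lemma dotProduct_le_dotProduct_self_div {ι : Type*} [Fintype ι] {a b : ι → ℝ} {c : ℝ}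
    (hc : 0 < c) (h : c * (a ⬝ᵥ a) ≤ a ⬝ᵥ b) : a ⬝ᵥ b ≤ (b ⬝ᵥ b) / c := by
  have hsq : 0 ≤ (c • a - b) ⬝ᵥ (c • a - b) := by
    simpa using dotProduct_star_self_nonneg (c • a - b)
  simp only [sub_dotProduct, dotProduct_sub, smul_dotProduct, dotProduct_smul, smul_eq_mul,
    dotProduct_comm b a] at hsq
  rw [le_div_iff₀ hc]
  nlinarith

open scoped MatrixOrder in
lemma Matrix.IsHermitian.mul_dotProduct_self_le {ι : Type*} [Fintype ι] [DecidableEq ι]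
    {M : Matrix ι ι ℝ} (hM : M.IsHermitian) {c : ℝ} (hc : ∀ i, c ≤ hM.eigenvalues i) (x : ι → ℝ) :
    c * (x ⬝ᵥ x) ≤ x ⬝ᵥ (M *ᵥ x) := by
  have hle : algebraMap ℝ (Matrix ι ι ℝ) c ≤ M := by
    rw [algebraMap_le_iff_le_spectrum hM.isSelfAdjoint, hM.spectrum_real_eq_range_eigenvalues]
    rintro _ ⟨i, rfl⟩
    exact hc i
  have := (le_iff.mp hle).dotProduct_mulVec_nonneg x
  simp only [star_trivial, Algebra.algebraMap_eq_smul_one, sub_mulVec, smul_mulVec, one_mulVec,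
    dotProduct_sub, dotProduct_smul, smul_eq_mul] at this
  linarith

section ImplicitSkewStep

variable {ι κ : Type*} [Fintype ι] [Fintype κ]

def IsImplicitSkewStep (B : Matrix ι κ ℝ) (η : ℝ) (u : ι → ℝ) (v : κ → ℝ) (θ : ι → ℝ)
    (φ : κ → ℝ) : Prop :=
  θ = u - η • (B *ᵥ φ) ∧ φ = v + η • (Bᵀ *ᵥ θ)

theorem IsImplicitSkewStep.unique {B : Matrix ι κ ℝ} {η : ℝ} {u : ι → ℝ} {v : κ → ℝ}
    {θ₁ θ₂ : ι → ℝ} {φ₁ φ₂ : κ → ℝ} (h₁ : IsImplicitSkewStep B η u v θ₁ φ₁)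
    (h₂ : IsImplicitSkewStep B η u v θ₂ φ₂) : θ₁ = θ₂ ∧ φ₁ = φ₂ := by
  obtain ⟨hθ₁, hφ₁⟩ := h₁
  obtain ⟨hθ₂, hφ₂⟩ := h₂
  have hx : θ₁ - θ₂ = -(η • (B *ᵥ (φ₁ - φ₂))) := by rw [hθ₁, hθ₂, mulVec_sub]; module
  have hy : φ₁ - φ₂ = η • (Bᵀ *ᵥ (θ₁ - θ₂)) := by rw [hφ₁, hφ₂, mulVec_sub]; module
  have hzero : (θ₁ - θ₂) ⬝ᵥ (θ₁ - θ₂) + (φ₁ - φ₂) ⬝ᵥ (φ₁ - φ₂) = 0 := by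
    calc _ = (θ₁ - θ₂) ⬝ᵥ -(η • (B *ᵥ (φ₁ - φ₂))) + (φ₁ - φ₂) ⬝ᵥ (η • (Bᵀ *ᵥ (θ₁ - θ₂))) := by
          rw [← hx, ← hy]
      _ = 0 := by
          rw [dotProduct_neg, dotProduct_smul, dotProduct_smul, dotProduct_transpose_mulVec]
          ring
  rw [add_eq_zero_iff_of_nonneg (by simpa using dotProduct_star_self_nonneg (θ₁ - θ₂))
    (by simpa using dotProduct_star_self_nonneg (φ₁ - φ₂)), dotProduct_self_eq_zero,
    dotProduct_self_eq_zero, sub_eq_zero, sub_eq_zero] at hzero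
  exact hzero

lemma dotProduct_mul_transpose_mulVec (B : Matrix ι κ ℝ) (x : ι → ℝ) :
    x ⬝ᵥ ((B * Bᵀ) *ᵥ x) = (Bᵀ *ᵥ x) ⬝ᵥ (Bᵀ *ᵥ x) := by
  rw [← mulVec_mulVec, dotProduct_mulVec, ← mulVec_transpose]

lemma dotProduct_transpose_mul_mulVec (B : Matrix ι κ ℝ) (y : κ → ℝ) :
    y ⬝ᵥ ((Bᵀ * B) *ᵥ y) = (B *ᵥ y) ⬝ᵥ (B *ᵥ y) := by
  simpa using dotProduct_mul_transpose_mulVec Bᵀ y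

section

variable [DecidableEq ι]

lemma posDef_one_add_sq_smul_mul_transpose (B : Matrix ι κ ℝ) (η : ℝ) :
    (1 + η ^ 2 • (B * Bᵀ)).PosDef :=
  PosDef.one.add_posSemidef ((posSemidef_self_mul_conjTranspose B).smul (sq_nonneg η))

lemma dotProduct_one_add_sq_smul_mul_transpose_mulVec (B : Matrix ι κ ℝ) (η : ℝ) (x : ι → ℝ) :
    x ⬝ᵥ ((1 + η ^ 2 • (B * Bᵀ)) *ᵥ x) = x ⬝ᵥ x + η ^ 2 * ((Bᵀ *ᵥ x) ⬝ᵥ (Bᵀ *ᵥ x)) := by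
  rw [add_mulVec, one_mulVec, smul_mulVec, dotProduct_add, dotProduct_smul, smul_eq_mul,
    dotProduct_mul_transpose_mulVec]

lemma dotProduct_one_add_sq_smul_mul_transpose_mulVec_le (B : Matrix ι κ ℝ) (η : ℝ) {ℓ : ℝ}
    (hℓ : 0 ≤ ℓ) (hB : ∀ x, ℓ * (x ⬝ᵥ x) ≤ (Bᵀ *ᵥ x) ⬝ᵥ (Bᵀ *ᵥ x)) (p : ι → ℝ) :
    p ⬝ᵥ ((1 + η ^ 2 • (B * Bᵀ)) *ᵥ p) ≤
      ((1 + η ^ 2 • (B * Bᵀ)) *ᵥ p) ⬝ᵥ ((1 + η ^ 2 • (B * Bᵀ)) *ᵥ p) / (1 + η ^ 2 * ℓ) := by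
  refine dotProduct_le_dotProduct_self_div (by positivity) ?_
  rw [dotProduct_one_add_sq_smul_mul_transpose_mulVec]
  nlinarith [hB p, sq_nonneg η]

variable [DecidableEq κ]

theorem isImplicitSkewStep_decouple (B : Matrix ι κ ℝ) (η : ℝ) (p : ι → ℝ) (q : κ → ℝ) :
    IsImplicitSkewStep B η ((1 + η ^ 2 • (B * Bᵀ)) *ᵥ p) ((1 + η ^ 2 • (Bᵀ * B)) *ᵥ q)
      (p - η • (B *ᵥ q)) (q + η • (Bᵀ *ᵥ p)) := by
  constructor <;>
  · simp only [add_mulVec, one_mulVec, smul_mulVec, ← mulVec_mulVec, mulVec_add, mulVec_sub,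
      mulVec_smul]
    module

lemma dotProduct_self_add_dotProduct_self_decouple (B : Matrix ι κ ℝ) (η : ℝ) (p : ι → ℝ)
    (q : κ → ℝ) :
    (p - η • (B *ᵥ q)) ⬝ᵥ (p - η • (B *ᵥ q)) + (q + η • (Bᵀ *ᵥ p)) ⬝ᵥ (q + η • (Bᵀ *ᵥ p)) =
      p ⬝ᵥ ((1 + η ^ 2 • (B * Bᵀ)) *ᵥ p) + q ⬝ᵥ ((1 + η ^ 2 • (Bᵀ * B)) *ᵥ q) := by
  have hq := dotProduct_one_add_sq_smul_mul_transpose_mulVec Bᵀ η q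
  rw [transpose_transpose] at hq
  rw [dotProduct_one_add_sq_smul_mul_transpose_mulVec, hq]
  simp only [dotProduct_sub, sub_dotProduct, dotProduct_add, add_dotProduct, dotProduct_smul,
    smul_dotProduct, smul_eq_mul, mulVec_add, mulVec_smul, dotProduct_transpose_mulVec,
    dotProduct_comm (B *ᵥ q) p, dotProduct_comm (Bᵀ *ᵥ p) q]
  ring

end

theorem IsImplicitSkewStep.dotProduct_self_add_le {B : Matrix ι κ ℝ} {η ℓ₁ ℓ₂ : ℝ}
    {u θ : ι → ℝ} {v φ : κ → ℝ} (hℓ₁ : 0 ≤ ℓ₁) (hℓ₂ : 0 ≤ ℓ₂)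
    (hB₁ : ∀ x, ℓ₁ * (x ⬝ᵥ x) ≤ (Bᵀ *ᵥ x) ⬝ᵥ (Bᵀ *ᵥ x))
    (hB₂ : ∀ y, ℓ₂ * (y ⬝ᵥ y) ≤ (B *ᵥ y) ⬝ᵥ (B *ᵥ y)) (h : IsImplicitSkewStep B η u v θ φ) :
    θ ⬝ᵥ θ + φ ⬝ᵥ φ ≤ u ⬝ᵥ u / (1 + η ^ 2 * ℓ₁) + v ⬝ᵥ v / (1 + η ^ 2 * ℓ₂) := by
  classical
  obtain ⟨p, rfl⟩ :=
    mulVec_surjective_iff_isUnit.mpr (posDef_one_add_sq_smul_mul_transpose B η).isUnit u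
  obtain ⟨q, rfl⟩ :=
    mulVec_surjective_iff_isUnit.mpr (posDef_one_add_sq_smul_mul_transpose Bᵀ η).isUnit v
  rw [transpose_transpose] at h
  obtain ⟨rfl, rfl⟩ := h.unique (isImplicitSkewStep_decouple B η p q)
  rw [dotProduct_self_add_dotProduct_self_decouple]
  have hq := dotProduct_one_add_sq_smul_mul_transpose_mulVec_le Bᵀ η hℓ₂ (by simpa using hB₂) q
  rw [transpose_transpose] at hq
  exact add_le_add (dotProduct_one_add_sq_smul_mul_transpose_mulVec_le B η hℓ₁ hB₁ p) hq

end ImplicitSkewStep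

theorem linearized_sppm_contraction_estimate_general
    (m n : ℕ) (A : Matrix (Fin m) (Fin m) ℝ) (C : Matrix (Fin n) (Fin n) ℝ)
    (B : Matrix (Fin m) (Fin n) ℝ) (η : ℝ)
    (hBBt : (B * Bᵀ).IsHermitian) (hBtB : (Bᵀ * B).IsHermitian)
    (lmin₁ lmin₂ : ℝ)
    (hlmin₁ : IsLeast (Set.range hBBt.eigenvalues) lmin₁)
    (hlmin₂ : IsLeast (Set.range hBtB.eigenvalues) lmin₂)
    (θ θ' : Fin m → ℝ) (φ φ' : Fin n → ℝ)
    (hθ' : θ' = θ - η • (A *ᵥ θ) - η • (B *ᵥ φ'))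
    (hφ' : φ' = φ + η • (Bᵀ *ᵥ θ') + η • (C *ᵥ φ)) :
    eNormSq θ' + eNormSq φ' ≤
      ‖Matrix.toEuclideanCLM (𝕜 := ℝ) ((1 : Matrix (Fin m) (Fin m) ℝ) - η • A)‖ ^ 2 *
          eNormSq θ / (1 + η ^ 2 * lmin₁) +
      ‖Matrix.toEuclideanCLM (𝕜 := ℝ) ((1 : Matrix (Fin n) (Fin n) ℝ) + η • C)‖ ^ 2 *
          eNormSq φ / (1 + η ^ 2 * lmin₂) := by
  have hℓ₁ : 0 ≤ lmin₁ := by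
    obtain ⟨i, rfl⟩ := hlmin₁.1
    exact eigenvalues_self_mul_conjTranspose_nonneg B i
  have hℓ₂ : 0 ≤ lmin₂ := by
    obtain ⟨i, rfl⟩ := hlmin₂.1
    exact eigenvalues_conjTranspose_mul_self_nonneg B i
  have hB₁ (x : Fin m → ℝ) : lmin₁ * (x ⬝ᵥ x) ≤ (Bᵀ *ᵥ x) ⬝ᵥ (Bᵀ *ᵥ x) :=
    dotProduct_mul_transpose_mulVec B x ▸ hBBt.mul_dotProduct_self_le (fun i ↦ hlmin₁.2 ⟨i, rfl⟩) x
  have hB₂ (y : Fin n → ℝ) : lmin₂ * (y ⬝ᵥ y) ≤ (B *ᵥ y) ⬝ᵥ (B *ᵥ y) :=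
    dotProduct_transpose_mul_mulVec B y ▸ hBtB.mul_dotProduct_self_le (fun i ↦ hlmin₂.2 ⟨i, rfl⟩) y
  have hstep : IsImplicitSkewStep B η ((1 - η • A) *ᵥ θ) ((1 + η • C) *ᵥ φ) θ' φ' := by
    constructor
    · rw [hθ', sub_mulVec, one_mulVec, smul_mulVec]
    · rw [hφ', add_mulVec, one_mulVec, smul_mulVec]
      abel
  calc eNormSq θ' + eNormSq φ'
      ≤ eNormSq ((1 - η • A) *ᵥ θ) / (1 + η ^ 2 * lmin₁) +
          eNormSq ((1 + η • C) *ᵥ φ) / (1 + η ^ 2 * lmin₂) := by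
        simpa only [eNormSq_eq_dotProduct] using hstep.dotProduct_self_add_le hℓ₁ hℓ₂ hB₁ hB₂
    _ ≤ _ := by gcongr <;> exact eNormSq_mulVec_le _ _

/-- local contraction estimate for the linearized SPPM step
(Theorem 2 of the paper, appendix form). -/
theorem linearized_sppm_contraction_estimate
    (m n : ℕ) (A : Matrix (Fin m) (Fin m) ℝ) (C : Matrix (Fin n) (Fin n) ℝ)
    (B : Matrix (Fin m) (Fin n) ℝ) (η : ℝ)
    (hA : A.IsHermitian) (hC : C.IsHermitian)
    (hBBt : (B * Bᵀ).IsHermitian) (hBtB : (Bᵀ * B).IsHermitian)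
    (lmin₁ lmin₂ : ℝ)
    (hlmin₁ : IsLeast (Set.range hBBt.eigenvalues) lmin₁)
    (hlmin₂ : IsLeast (Set.range hBtB.eigenvalues) lmin₂)
    (θ θ' : Fin m → ℝ) (φ φ' : Fin n → ℝ)
    (hθ' : θ' = θ - η • (A *ᵥ θ) - η • (B *ᵥ φ'))
    (hφ' : φ' = φ + η • (Bᵀ *ᵥ θ') + η • (C *ᵥ φ)) :
    eNormSq θ' + eNormSq φ' ≤
      ‖Matrix.toEuclideanCLM (𝕜 := ℝ) ((1 : Matrix (Fin m) (Fin m) ℝ) - η • A)‖ ^ 2 *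
          eNormSq θ / (1 + η ^ 2 * lmin₁) +
      ‖Matrix.toEuclideanCLM (𝕜 := ℝ) ((1 : Matrix (Fin n) (Fin n) ℝ) + η • C)‖ ^ 2 *
          eNormSq φ / (1 + η ^ 2 * lmin₂) :=
  linearized_sppm_contraction_estimate_general m n A C B η hBBt hBtB lmin₁ lmin₂ hlmin₁ hlmin₂ θ θ'
    φ φ' hθ' hφ'
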